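/- arXiv:1202.4307 — 5 statements merged into one kernel-verified Lean document; each statement's English description precedes it below -/
import Mathlib

section
/- With λ_k = γ s_k - 2γ + 2 and C_0 = 2(1 + γ(s_0 - 1)) + γ λ_0 ∑_{k=1}^{j} s_k/λ_k, the equilibrium worth of the coalition of size s_0 = s equals v = s(1 + γ s - γ)((a-c)/C_0)², where the worth is v = s_0 (a - y_0 - γ(s_0-1)y_0 - γ∑_{k=1}^{j} s_k y_k - c) y_0 and the y_i solve the first-order system. -/
open Finset

/-- the equilibrium worth of the coalition of size `s 0` equals
`s(1+γs-γ)((a-c)/C₀)²`, where `C₀ = 2(1+γ(s₀-1)) + γ lam₀ ∑_{k=1}^j s_k/λ_k`. -/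
theorem coalition_worth_formula (n j : ℕ) (s : Fin (j + 1) → ℕ)
    (hs : ∀ i, 1 ≤ s i) (hsum : ∑ i, s i = n)
    (a c γ : ℝ) (hc : 0 < c) (hca : c < a)
    (hγl : -1 < γ) (hγu : γ ≤ 1) (hγ0 : γ ≠ 0) (hγK : γ > -1 / ((n : ℝ) - 1))
    (A : Fin (j + 1) → ℝ)
    (hA : ∀ i, A i = ∑ k ∈ univ.erase i,
      (s k : ℝ) * (2 + γ * (s i : ℝ) - 2 * γ) / (γ * (s k : ℝ) - 2 * γ + 2))
    (y : Fin (j + 1) → ℝ)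
    (hy : ∀ i, y i = (a - c) / (2 * (1 + γ * ((s i : ℝ) - 1)) + γ * A i))
    (lam : Fin (j + 1) → ℝ)
    (hlam : ∀ k, lam k = γ * (s k : ℝ) - 2 * γ + 2)
    (C₀ : ℝ)
    (hC₀ : C₀ = 2 * (1 + γ * ((s 0 : ℝ) - 1))
      + γ * lam 0 * ∑ k ∈ univ.erase 0, (s k : ℝ) / lam k) :
    (s 0 : ℝ) * (a - y 0 - γ * ((s 0 : ℝ) - 1) * y 0
        - γ * (∑ k ∈ univ.erase 0, (s k : ℝ) * y k) - c) * y 0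
      = (s 0 : ℝ) * (1 + γ * (s 0 : ℝ) - γ) * ((a - c) / C₀) ^ 2 := by
  -- basic facts
  have hn1 : 1 ≤ n := by
    have h1 : 1 ≤ ∑ i, s i :=
      le_trans (hs 0) (Finset.single_le_sum (fun i _ => Nat.zero_le _) (mem_univ 0))
    exact hsum ▸ h1
  have hsk_le : ∀ k, (s k : ℝ) ≤ (n : ℝ) := by
    intro k
    have : s k ≤ ∑ i, s i :=
      Finset.single_le_sum (fun i _ => Nat.zero_le _) (mem_univ k)
    exact_mod_cast hsum ▸ this
  have hsk_ge : ∀ k, (1 : ℝ) ≤ (s k : ℝ) := by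
    intro k; exact_mod_cast hs k
  have hK' : -1 < γ * ((n : ℝ) - 1) := by
    rcases Nat.lt_or_ge n 2 with h | h
    · interval_cases n
      norm_num
    · have hpos : (0 : ℝ) < (n : ℝ) - 1 := by
        have : (2 : ℝ) ≤ (n : ℝ) := by exact_mod_cast h
        linarith
      have := (div_lt_iff₀ hpos).mp hγK
      linarith
  -- positivity of lam
  have hlampos : ∀ k, 0 < lam k := by
    intro k
    rw [hlam k]
    rcases lt_or_gt_of_ne hγ0 with hneg | hpos
    · nlinarith [hsk_le k, hsk_ge k, mul_nonneg (neg_nonneg.mpr hneg.le)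
        (sub_nonneg.mpr (hsk_le k))]
    · nlinarith [hsk_ge k, mul_nonneg hpos.le (sub_nonneg.mpr (hsk_ge k))]
  have lamne : ∀ k, lam k ≠ 0 := fun k => (hlampos k).ne'
  obtain ⟨S, hS⟩ : ∃ S : ℝ, S = ∑ k, (s k : ℝ) / lam k := ⟨_, rfl⟩
  obtain ⟨E, hE⟩ : ∃ E : ℝ, E = 1 + γ * S := ⟨_, rfl⟩
  -- rewrite A
  have hTA : ∀ i, A i = lam i * ∑ k ∈ univ.erase i, (s k : ℝ) / lam k := by
    intro i
    rw [hA, Finset.mul_sum]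
    refine Finset.sum_congr rfl fun k _ => ?_
    rw [hlam i, hlam k]
    ring
  -- denominator identity
  have hden : ∀ i, 2 * (1 + γ * ((s i : ℝ) - 1)) + γ * A i = lam i * E := by
    intro i
    have hsplit : S = (s i : ℝ) / lam i + ∑ k ∈ univ.erase i, (s k : ℝ) / lam k := by
      rw [hS, ← Finset.add_sum_erase univ _ (mem_univ i)]
    have h1 : lam i * ((s i : ℝ) / lam i) = (s i : ℝ) := mul_div_cancel₀ _ (lamne i)
    calc 2 * (1 + γ * ((s i : ℝ) - 1)) + γ * A i
        = lam i + γ * (s i : ℝ) + γ * (lam i * ∑ k ∈ univ.erase i, (s k : ℝ) / lam k) := by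
          rw [hTA i, hlam i]; ring
      _ = lam i * (1 + γ * ((s i : ℝ) / lam i + ∑ k ∈ univ.erase i, (s k : ℝ) / lam k)) := by
          linear_combination -γ * h1
      _ = lam i * E := by rw [hE, hsplit]
  have hy' : ∀ i, y i = (a - c) / (lam i * E) := by
    intro i; rw [hy i, hden i]
  have hC0' : C₀ = lam 0 * E := by
    have h := hden 0
    rw [hTA 0] at h
    rw [hC₀]
    linear_combination h
  rcases eq_or_ne E 0 with hE0 | hE0
  · have hy0 : y 0 = 0 := by rw [hy' 0, hE0, mul_zero, div_zero]
    rw [hy0, hC0', hE0]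
    simp
  · obtain ⟨T, hT⟩ : ∃ T : ℝ, T = ∑ k ∈ univ.erase 0, (s k : ℝ) / lam k := ⟨_, rfl⟩
    have hsumy : ∑ k ∈ univ.erase 0, (s k : ℝ) * y k = (a - c) / E * T := by
      rw [hT, Finset.mul_sum]
      refine Finset.sum_congr rfl fun k _ => ?_
      rw [hy' k]
      field_simp
    have hrel : lam 0 * E = 2 * (1 + γ * ((s 0 : ℝ) - 1)) + γ * (lam 0 * T) := by
      have h := hden 0
      rw [hTA 0, ← hT] at h
      linear_combination -h
    have hTsub : γ * ((a - c) / E * T)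
        = (a - c) - 2 * (1 + γ * ((s 0 : ℝ) - 1)) * ((a - c) / (lam 0 * E)) := by
      have h2 : γ * ((a - c) / E * T) = (a - c) * (γ * (lam 0 * T)) / (lam 0 * E) := by
        field_simp [lamne 0, hE0]
      rw [h2, show γ * (lam 0 * T) = lam 0 * E - 2 * (1 + γ * ((s 0 : ℝ) - 1)) by
        linear_combination -hrel]
      field_simp [lamne 0, hE0]
    rw [hsumy, hy' 0, hC0', hTsub]
    ring
end

section
/- When γ = 1, the equilibrium quantities satisfy y_i = (a-c)/(s_i(j+2)) for all i = 0,…,j, and consequently the worth of coalition S of size s = s_0 facing any partition of the outsiders into j coalitions equals ((a-c)/(j+2))², independent of the sizes s_1,…,s_j. -/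
/-!
At `γ = 1` every ratio `s_k (2 + γ s_i - 2γ) / (γ s_k - 2γ + 2)` collapses to `s_i`, so
`A_i = j s_i` and the denominator of `y_i` is `s_i (j + 2)`. Likewise `λ_k = s_k`, so
`C₀ = s₀ (j + 2)`, and the factor `s₀ (1 + γ (s₀ - 1)) = s₀²` in the worth cancels `s₀²` in `C₀²`.
-/

open Finset

lemma Fin.sum_erase_const {R : Type*} [Semiring R] {j : ℕ} (i : Fin (j + 1)) (c : R) :
    ∑ _k ∈ univ.erase i, c = j * c := by
  simp [card_erase_of_mem]

lemma Fin.sum_erase_mul_div_cancel {K : Type*} [Field K] {j : ℕ} (x : Fin (j + 1) → K)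
    (hx : ∀ k, x k ≠ 0) (i : Fin (j + 1)) (c : K) :
    ∑ k ∈ univ.erase i, x k * c / x k = j * c := by
  rw [sum_congr rfl fun k _ => mul_div_cancel_left₀ c (hx k), Fin.sum_erase_const]

lemma Fin.sum_erase_div_self {K : Type*} [Field K] {j : ℕ} (x : Fin (j + 1) → K)
    (hx : ∀ k, x k ≠ 0) (i : Fin (j + 1)) :
    ∑ k ∈ univ.erase i, x k / x k = j := by
  simpa using Fin.sum_erase_mul_div_cancel x hx i 1

theorem gamma_one_worth_general (j : ℕ) (s : Fin (j + 1) → ℕ)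
    (hs : ∀ i, 1 ≤ s i)
    (a c γ : ℝ) (hγ : γ = 1)
    (A : Fin (j + 1) → ℝ)
    (hA : ∀ i, A i = ∑ k ∈ univ.erase i,
      (s k : ℝ) * (2 + γ * (s i : ℝ) - 2 * γ) / (γ * (s k : ℝ) - 2 * γ + 2))
    (y : Fin (j + 1) → ℝ)
    (hy : ∀ i, y i = (a - c) / (2 * (1 + γ * ((s i : ℝ) - 1)) + γ * A i))
    (lam : Fin (j + 1) → ℝ)
    (hlam : ∀ k, lam k = γ * (s k : ℝ) - 2 * γ + 2)
    (C₀ : ℝ)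
    (hC₀ : C₀ = 2 * (1 + γ * ((s 0 : ℝ) - 1))
      + γ * lam 0 * ∑ k ∈ univ.erase 0, (s k : ℝ) / lam k) :
    (∀ i, y i = (a - c) / ((s i : ℝ) * ((j : ℝ) + 2))) ∧
    (s 0 : ℝ) * (1 + γ * ((s 0 : ℝ) - 1)) * ((a - c) / C₀) ^ 2
      = ((a - c) / ((j : ℝ) + 2)) ^ 2 := by
  subst hγ
  have hs_ne : ∀ i, (s i : ℝ) ≠ 0 := fun i => Nat.cast_ne_zero.2 (by have := hs i; omega)
  simp only [one_mul, mul_one, add_sub_cancel_left, sub_add_cancel] at hA hy hlam hC₀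
  have hA_eq : ∀ i, A i = j * s i := fun i =>
    (hA i).trans (Fin.sum_erase_mul_div_cancel _ hs_ne i _)
  have hC₀_eq : C₀ = s 0 * (j + 2) := by
    rw [hC₀, hlam, funext hlam, Fin.sum_erase_div_self _ hs_ne]
    ring
  refine ⟨fun i => by rw [hy, hA_eq]; ring_nf, ?_⟩
  rw [hC₀_eq]
  field_simp [hs_ne 0]
  ring

/-- for `γ = 1` the equilibrium quantities are
`y_i = (a-c)/(s_i (j+2))` and the worth of the coalition of size `s 0` is
`((a-c)/(j+2))²`, independent of the outsiders' sizes. -/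
theorem gamma_one_worth (n j : ℕ) (s : Fin (j + 1) → ℕ)
    (hs : ∀ i, 1 ≤ s i) (hsum : ∑ i, s i = n)
    (a c γ : ℝ) (hc : 0 < c) (hca : c < a) (hγ : γ = 1)
    (A : Fin (j + 1) → ℝ)
    (hA : ∀ i, A i = ∑ k ∈ univ.erase i,
      (s k : ℝ) * (2 + γ * (s i : ℝ) - 2 * γ) / (γ * (s k : ℝ) - 2 * γ + 2))
    (y : Fin (j + 1) → ℝ)
    (hy : ∀ i, y i = (a - c) / (2 * (1 + γ * ((s i : ℝ) - 1)) + γ * A i))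
    (lam : Fin (j + 1) → ℝ)
    (hlam : ∀ k, lam k = γ * (s k : ℝ) - 2 * γ + 2)
    (C₀ : ℝ)
    (hC₀ : C₀ = 2 * (1 + γ * ((s 0 : ℝ) - 1))
      + γ * lam 0 * ∑ k ∈ univ.erase 0, (s k : ℝ) / lam k) :
    (∀ i, y i = (a - c) / ((s i : ℝ) * ((j : ℝ) + 2))) ∧
    (s 0 : ℝ) * (1 + γ * ((s 0 : ℝ) - 1)) * ((a - c) / C₀) ^ 2
      = ((a - c) / ((j : ℝ) + 2)) ^ 2 :=
  gamma_one_worth_general j s hs a c γ hγ A hA y hy lam hlam C₀ hC₀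
end

section
/- Let γ ∈ (0,1], n > s ≥ 1, λ_0 = γs - 2γ + 2, σ = 1 + γ(s-1), ν = 1 + γ(n-1). Define ζ = 2(√(ν/σ) - 1)/(1 + (1-γ)/σ). If s_1,…,s_j are positive integers with ∑ s_k = n - s and ∑_{k=1}^j γ s_k/(γ s_k + 2(1-γ)) ≥ ζ, then the per-capita worth of the deviating coalition does not exceed the per-capita grand-coalition worth: v(S)/s ≤ v(N)/n, where v(S) = s·σ·((a-c)/C_0)² with C_0 = 2σ + γλ_0 ∑ s_k/λ_k and v(N) = n(a-c)²/(4ν). -/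
open Finset

/-- Theorem 2 core step: for `γ ∈ (0,1]`, if the outsiders'
sizes satisfy `∑ γ s_k/(γ s_k + 2(1-γ)) ≥ ζ`, then the per-capita worth of the
deviating coalition does not exceed the per-capita grand-coalition worth. -/
theorem core_condition_positive_gamma (n s j : ℕ) (hs : 1 ≤ s) (hsn : s < n)
    (γ : ℝ) (hγ0 : 0 < γ) (hγ1 : γ ≤ 1)
    (a c : ℝ) (hc : 0 < c) (hca : c < a)
    (sz : Fin j → ℕ) (hsz : ∀ k, 1 ≤ sz k) (hsum : ∑ k, sz k = n - s)
    (σ ν lam₀ ζ C₀ : ℝ)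
    (hσ : σ = 1 + γ * ((s : ℝ) - 1)) (hν : ν = 1 + γ * ((n : ℝ) - 1))
    (hlam₀ : lam₀ = γ * (s : ℝ) - 2 * γ + 2)
    (hζ : ζ = 2 * (Real.sqrt (ν / σ) - 1) / (1 + (1 - γ) / σ))
    (hC₀ : C₀ = 2 * σ + γ * lam₀ * ∑ k, (sz k : ℝ) / (γ * (sz k : ℝ) - 2 * γ + 2))
    (hbelief : ∑ k, γ * (sz k : ℝ) / (γ * (sz k : ℝ) + 2 * (1 - γ)) ≥ ζ) :
    (s : ℝ) * σ * ((a - c) / C₀) ^ 2 / (s : ℝ)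
      ≤ (n : ℝ) * (a - c) ^ 2 / (4 * ν) / (n : ℝ) := by
  have h1γ : 0 ≤ 1 - γ := by linarith
  have hsR : (1:ℝ) ≤ (s:ℝ) := by exact_mod_cast hs
  have hnR : (1:ℝ) ≤ (n:ℝ) := by exact_mod_cast (hs.trans hsn.le)
  have hσ1 : (1:ℝ) ≤ σ := by nlinarith [hγ0.le]
  have hσpos : 0 < σ := by linarith
  have hνpos : 0 < ν := by nlinarith [hγ0.le]
  have hlam : lam₀ = σ + (1 - γ) := by rw [hlam₀, hσ]; ring
  have hlampos : 0 < lam₀ := by rw [hlam]; linarith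
  set T := ∑ k, γ * (sz k : ℝ) / (γ * (sz k : ℝ) + 2 * (1 - γ)) with hT
  have hTnn : 0 ≤ T := by
    apply Finset.sum_nonneg
    intro k _
    have h1 : (1:ℝ) ≤ (sz k : ℝ) := by exact_mod_cast hsz k
    apply div_nonneg <;> nlinarith
  have hC₀' : C₀ = 2 * σ + lam₀ * T := by
    rw [hC₀, hT]
    congr 1
    rw [Finset.mul_sum, Finset.mul_sum]
    apply Finset.sum_congr rfl
    intro k _
    have hd : γ * (sz k:ℝ) + 2 * (1 - γ) = γ * (sz k:ℝ) - 2 * γ + 2 := by ring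
    rw [hd, div_eq_mul_inv, div_eq_mul_inv]
    ring
  have hsq : Real.sqrt (ν / σ) * σ = Real.sqrt (σ * ν) := by
    rw [show σ * ν = (ν / σ) * σ ^ 2 by field_simp]
    rw [Real.sqrt_mul (by positivity), Real.sqrt_sq hσpos.le]
  have hζ' : lam₀ * ζ = 2 * Real.sqrt (σ * ν) - 2 * σ := by
    rw [hζ]
    have h1 : 1 + (1 - γ) / σ = lam₀ / σ := by rw [hlam]; field_simp
    rw [h1]
    have hne : lam₀ ≠ 0 := ne_of_gt hlampos
    rw [div_div_eq_mul_div, mul_div_assoc', mul_div_cancel_left₀ _ hne]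
    linear_combination 2 * hsq
  have hCge : 2 * Real.sqrt (σ * ν) ≤ C₀ := by
    have h2 := mul_le_mul_of_nonneg_left hbelief hlampos.le
    rw [hC₀']; nlinarith [h2, hζ']
  have hC0pos : 0 < C₀ := by
    rw [hC₀']; nlinarith [mul_nonneg hlampos.le hTnn]
  have hCsq : 4 * (σ * ν) ≤ C₀ ^ 2 := by
    have h := Real.sq_sqrt (mul_nonneg hσpos.le hνpos.le)
    have hr : (0:ℝ) ≤ 2 * Real.sqrt (σ * ν) := by positivity
    have h2 := mul_self_le_mul_self hr hCge
    have h3 : (2 * Real.sqrt (σ * ν)) * (2 * Real.sqrt (σ * ν)) = 4 * (σ * ν) := by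
      linear_combination 4 * h
    rw [pow_two]
    linarith
  have hs0 : (0:ℝ) < (s:ℝ) := by linarith
  have hn0 : (0:ℝ) < (n:ℝ) := by linarith
  have hL : (s:ℝ) * σ * ((a - c) / C₀) ^ 2 / (s:ℝ) = σ * (a - c) ^ 2 / C₀ ^ 2 := by
    field_simp
  have hR : (n:ℝ) * (a - c) ^ 2 / (4 * ν) / (n:ℝ) = (a - c) ^ 2 / (4 * ν) := by
    field_simp
  rw [hL, hR, div_le_div_iff₀ (by positivity) (by positivity)]
  have hac : (0:ℝ) < (a - c) ^ 2 := pow_pos (by linarith) 2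
  calc σ * (a - c) ^ 2 * (4 * ν) = (a - c) ^ 2 * (4 * (σ * ν)) := by ring
    _ ≤ (a - c) ^ 2 * C₀ ^ 2 := mul_le_mul_of_nonneg_left hCsq hac.le
end

section
/- Let γ ∈ (0,1], n > s ≥ 1, and let ζ = 2(√(ν/σ)-1)/(1+(1-γ)/σ) with σ = 1+γ(s-1), ν = 1+γ(n-1). Then for all integers n > s ≥ 1 and γ ∈ (0,1], ζ < n - s. -/
/-- the threshold `ζ` of Theorem 2 always satisfies `ζ < n - s`
for integers `n > s ≥ 1` and `γ ∈ (0,1]`. -/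
theorem zeta_lt_outsiders (n s : ℕ) (hs : 1 ≤ s) (hsn : s < n)
    (γ : ℝ) (hγ0 : 0 < γ) (hγ1 : γ ≤ 1) :
    2 * (Real.sqrt ((1 + γ * ((n : ℝ) - 1)) / (1 + γ * ((s : ℝ) - 1))) - 1)
        / (1 + (1 - γ) / (1 + γ * ((s : ℝ) - 1)))
      < (n : ℝ) - (s : ℝ) := by
  have hsR : (1 : ℝ) ≤ (s : ℝ) := by exact_mod_cast hs
  have hd : (0 : ℝ) < (n : ℝ) - (s : ℝ) := by
    have : (s : ℝ) < (n : ℝ) := by exact_mod_cast hsn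
    linarith
  set d : ℝ := (n : ℝ) - (s : ℝ) with hd_def
  set σ : ℝ := 1 + γ * ((s : ℝ) - 1) with hσ_def
  have hσ1 : (1 : ℝ) ≤ σ := by nlinarith
  have hσ0 : (0 : ℝ) < σ := by linarith
  -- rewrite the ratio
  have hratio : (1 + γ * ((n : ℝ) - 1)) / σ = 1 + γ * d / σ := by
    field_simp
    ring
  -- bound the square root
  have hx : 0 < γ * d / σ := by positivity
  have hsqrt : Real.sqrt ((1 + γ * ((n : ℝ) - 1)) / σ) < 1 + (γ * d / σ) / 2 := by
    rw [hratio]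
    have h2 : (0 : ℝ) < 1 + (γ * d / σ) / 2 := by positivity
    rw [Real.sqrt_lt' h2]
    nlinarith [sq_nonneg (γ * d / σ)]
  set t : ℝ := Real.sqrt ((1 + γ * ((n : ℝ) - 1)) / σ) with ht_def
  have hDnn : (0 : ℝ) ≤ (1 - γ) / σ := by
    apply div_nonneg <;> linarith
  have hD : (0 : ℝ) < 1 + (1 - γ) / σ := by linarith
  rw [div_lt_iff₀ hD]
  -- 2(t-1) < γ d / σ ≤ d ≤ d (1 + (1-γ)/σ)
  have h1 : 2 * (t - 1) < γ * d / σ := by linarith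
  have h2 : γ * d / σ ≤ d := by
    rw [div_le_iff₀ hσ0]
    nlinarith
  nlinarith [mul_nonneg hd.le hDnn]
end

section
/- Let γ ∈ (-1,0) with γ > -1/(n-1), and positive integers s_1,…,s_j with ∑_{k=1}^j s_k = m and λ_k = γ s_k - 2γ + 2 > 0. Then ∑_{k=1}^j s_k/λ_k ≤ (j-1)/(2-γ) + (m-j+1)/(γ(m-j+1) - 2γ + 2); that is, for negative γ the sum ∑ s_k/λ_k is maximized over integer partitions of m into j parts when j-1 parts equal 1 and one part equals m-(j-1). -/
/-! For `γ < 0` and `δ = 2 - 2γ > 0`, the map `t ↦ t / (γt + δ)` is convex wherever its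
denominator is positive, and `γ(n - 1) > -1` makes the denominator positive on `[1, m - j + 1]`.
Every `s_k` lies in that interval, since the other `j - 1` parts are at least `1`. Bounding each
`f(s_k)` by the chord of `f` over the interval and summing, the chord values add up to
`(j - 1) f(1) + f(m - j + 1)` because `∑ s_k = (j - 1) · 1 + (m - j + 1)`. -/

open Finset Set

theorem convexOn_div_affine {γ δ : ℝ} (hγδ : γ * δ ≤ 0) :
    ConvexOn ℝ {t | 0 < γ * t + δ} fun t => t / (γ * t + δ) := by
  have combo {x y a b : ℝ} (hab : a + b = 1) :
      γ * (a • x + b • y) + δ = a • (γ * x + δ) + b • (γ * y + δ) := by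
    simp only [smul_eq_mul]; linear_combination (-δ) * hab
  have hS : Convex ℝ {t | 0 < γ * t + δ} := fun x hx y hy a b ha hb hab => by
    simpa only [mem_ofPred_eq, Set.mem_Ioi, combo hab] using convex_Ioi (0 : ℝ) hx hy ha hb hab
  refine ⟨hS, fun x hx y hy a b ha hb hab => ?_⟩
  have hz := hS hx hy ha hb hab
  obtain rfl := eq_sub_of_add_eq' hab
  simp only [mem_ofPred_eq, smul_eq_mul] at hx hy hz ⊢
  have gap : a * (x / (γ * x + δ)) + (1 - a) * (y / (γ * y + δ))
      - (a * x + (1 - a) * y) / (γ * (a * x + (1 - a) * y) + δ)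
      = -(γ * δ) * a * (1 - a) * (x - y) ^ 2
        / ((γ * x + δ) * (γ * y + δ) * (γ * (a * x + (1 - a) * y) + δ)) := by
    rw [mul_div_assoc', mul_div_assoc', div_add_div _ _ hx.ne' hy.ne',
      div_sub_div _ _ (by positivity) hz.ne', div_eq_div_iff (by positivity) (by positivity)]
    ring
  have hγδ' : 0 ≤ -(γ * δ) := by linarith
  have : 0 ≤ -(γ * δ) * a * (1 - a) * (x - y) ^ 2
      / ((γ * x + δ) * (γ * y + δ) * (γ * (a * x + (1 - a) * y) + δ)) := by
    positivity
  linarith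

theorem ConvexOn.le_chord_of_mem_Icc {f : ℝ → ℝ} {a b x : ℝ} (hf : ConvexOn ℝ (Icc a b) f)
    (hx : x ∈ Icc a b) : (b - a) * f x ≤ (b - x) * f a + (x - a) * f b := by
  obtain hxb | rfl := hx.2.lt_or_eq
  · have hab : a ≤ b := hx.1.trans hxb.le
    have hba : 0 < b - a := by linarith [hx.1]
    have key := hf.2 (left_mem_Icc.2 hab) (right_mem_Icc.2 hab)
      (div_nonneg (sub_nonneg.2 hxb.le) hba.le) (div_nonneg (sub_nonneg.2 hx.1) hba.le)
      (by field_simp; ring)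
    have hcomb : ((b - x) / (b - a)) • a + ((x - a) / (b - a)) • b = x := by
      simp only [smul_eq_mul]; field_simp; ring
    rw [hcomb, smul_eq_mul, smul_eq_mul] at key
    calc (b - a) * f x ≤ (b - a) * ((b - x) / (b - a) * f a + (x - a) / (b - a) * f b) := by
          gcongr
      _ = (b - x) * f a + (x - a) * f b := by field_simp
  · simp

theorem ConvexOn.sum_le_extreme_of_sum_eq {ι : Type*} (s : Finset ι) {f : ℝ → ℝ} {a b : ℝ}
    {x : ι → ℝ} (hf : ConvexOn ℝ (Icc a b) f) (hx : ∀ i ∈ s, a ≤ x i)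
    (hsum : ∑ i ∈ s, x i = (#s - 1) * a + b) :
    ∑ i ∈ s, f (x i) ≤ (#s - 1) * f a + f b := by
  have hexcess : ∑ i ∈ s, (x i - a) = b - a := by
    rw [sum_sub_distrib, hsum, sum_const, nsmul_eq_mul]; ring
  have hexcess_nonneg (i) (hi : i ∈ s) : 0 ≤ x i - a := sub_nonneg.2 (hx i hi)
  have hxb (i) (hi : i ∈ s) : x i ∈ Icc a b := by
    have := single_le_sum hexcess_nonneg hi
    exact ⟨hx i hi, by linarith⟩
  obtain hab | rfl := (show a ≤ b by linarith [sum_nonneg hexcess_nonneg]).lt_or_eq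
  · refine le_of_mul_le_mul_left ?_ (sub_pos.2 hab)
    calc (b - a) * ∑ i ∈ s, f (x i) ≤ ∑ i ∈ s, ((b - x i) * f a + (x i - a) * f b) := by
          rw [mul_sum]; exact sum_le_sum fun i hi => hf.le_chord_of_mem_Icc (hxb i hi)
      _ = (b - a) * ((#s - 1) * f a + f b) := by
          rw [sum_add_distrib, ← sum_mul, ← sum_mul, hexcess, sum_sub_distrib, hsum, sum_const,
            nsmul_eq_mul]
          ring
  · have hxa (i) (hi : i ∈ s) : x i = a := by simpa using hxb i hi
    rw [sum_congr rfl fun i hi => by rw [hxa i hi], sum_const, nsmul_eq_mul]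
    linarith

theorem sum_sk_over_lambda_extreme_bound_neg_gamma_general (n m j : ℕ)
    (hn : 2 ≤ n) (hj : 1 ≤ j) (hmn : m ≤ n)
    (γ : ℝ) (hγu : γ < 0) (hγK : γ > -1 / ((n : ℝ) - 1))
    (s : Fin j → ℕ) (hs : ∀ k, 1 ≤ s k) (hsum : ∑ k, s k = m) :
    ∑ k, (s k : ℝ) / (γ * (s k : ℝ) - 2 * γ + 2)
      ≤ ((j : ℝ) - 1) / (2 - γ)
        + ((m : ℝ) - (j : ℝ) + 1)
          / (γ * ((m : ℝ) - (j : ℝ) + 1) - 2 * γ + 2) := by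
  set M : ℝ := (m : ℝ) - j + 1
  have hγn : -1 < γ * ((n : ℝ) - 1) := by
    have hn1 : (0 : ℝ) < n - 1 := by
      have : (2 : ℝ) ≤ n := by exact_mod_cast hn
      linarith
    linarith [(div_lt_iff₀ hn1).1 hγK]
  have hMn : M ≤ n := by
    have : (1 : ℝ) ≤ j := by exact_mod_cast hj
    have : (m : ℝ) ≤ n := by exact_mod_cast hmn
    linarith
  have hconv : ConvexOn ℝ (Icc 1 M) fun t => t / (γ * t - 2 * γ + 2) := by
    refine ((convexOn_div_affine (γ := γ) (δ := 2 - 2 * γ) (by nlinarith)).subset (fun t ht => ?_)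
      (convex_Icc 1 M)).congr fun t _ => by ring_nf
    have : γ * ((n : ℝ) - 1) ≤ γ * (t - 1) :=
      mul_le_mul_of_nonpos_left (by linarith [ht.2]) hγu.le
    show 0 < γ * t + (2 - 2 * γ)
    linarith
  have hcast : ∑ k, (s k : ℝ) = (#(univ : Finset (Fin j)) - 1) * 1 + M := by
    rw [← Nat.cast_sum, hsum, card_univ, Fintype.card_fin]
    ring
  calc ∑ k, (s k : ℝ) / (γ * (s k : ℝ) - 2 * γ + 2)
      ≤ (#(univ : Finset (Fin j)) - 1) * (1 / (γ * 1 - 2 * γ + 2)) + M / (γ * M - 2 * γ + 2) :=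
        hconv.sum_le_extreme_of_sum_eq univ (fun k _ => by exact_mod_cast hs k) hcast
    _ = ((j : ℝ) - 1) / (2 - γ) + M / (γ * M - 2 * γ + 2) := by
        rw [card_univ, Fintype.card_fin]
        ring

/-- for negative `γ` with `γ > -1/(n-1)`, the sum `∑ s_k/λ_k`
over positive integers summing to `m` is at most its value at the extreme
partition `(1,…,1,m-j+1)`. -/
theorem sum_sk_over_lambda_extreme_bound_neg_gamma (n m j : ℕ)
    (hn : 2 ≤ n) (hj : 1 ≤ j) (hjm : j ≤ m) (hmn : m ≤ n)
    (γ : ℝ) (hγl : -1 < γ) (hγu : γ < 0) (hγK : γ > -1 / ((n : ℝ) - 1))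
    (s : Fin j → ℕ) (hs : ∀ k, 1 ≤ s k) (hsum : ∑ k, s k = m)
    (hlampos : ∀ k, 0 < γ * (s k : ℝ) - 2 * γ + 2) :
    ∑ k, (s k : ℝ) / (γ * (s k : ℝ) - 2 * γ + 2)
      ≤ ((j : ℝ) - 1) / (2 - γ)
        + ((m : ℝ) - (j : ℝ) + 1)
          / (γ * ((m : ℝ) - (j : ℝ) + 1) - 2 * γ + 2) :=
  sum_sk_over_lambda_extreme_bound_neg_gamma_general n m j hn hj hmn γ hγu hγK s hs hsum
end
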